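/- arXiv:1907.06229 — 2 statements merged into one kernel-verified Lean document; each statement's English description precedes it below -/
import Mathlib

section
/- Let q be a transcendental complex number (or more generally q ∈ ℂ* not a root of unity with (1-q^{-2l})^3 (q^{3l}-1)^2 ≠ 0), and let l be a nonzero integer. Then the 3×3 matrix C(q,l) with entries [l c_{ij}]_q, where (c_{ij}) is the affine A_2^{(1)} Cartan matrix, is invertible. -/
/-!
With `t = q ^ l`, the matrix has `[2l]_q` on the diagonal and `[-l]_q` off it, so its determinant
is `([2l]_q - [-l]_q) ^ 2 * ([2l]_q + 2 [-l]_q)`. Clearing denominators, the two factors are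
`(t³ - 1)(t + 1) / (t² (q - q⁻¹))` and `(t² - 1)(t - 1)² / (t² (q - q⁻¹))`, and none of
`t³ - 1`, `t² - 1`, `q² - 1` vanishes when `q` is not a root of unity.
-/

theorem Matrix.det_fin_three_of_ite_eq {R : Type*} [CommRing R] (a b : R) :
    (Matrix.of fun i j : Fin 3 => if i = j then a else b).det = (a - b) ^ 2 * (a + 2 * b) := by
  simp only [Matrix.det_fin_three, Matrix.of_apply, Fin.isValue, Fin.reduceEq, ↓reduceIte]
  ring

/-- The symmetric quantum number `[m]_q`. -/
noncomputable def quantumNum {K : Type*} [Field K] (q : K) (m : ℤ) : K :=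
  (q ^ m - q ^ (-m)) / (q - q⁻¹)

section QuantumNum

variable {K : Type*} [Field K] {q : K}

theorem quantumNum_two_mul_sub_quantumNum_neg (hq : q ≠ 0) (l : ℤ) :
    quantumNum q (2 * l) - quantumNum q (-l) =
      ((q ^ l) ^ 3 - 1) * (q ^ l + 1) / ((q ^ l) ^ 2 * (q - q⁻¹)) := by
  have ht : q ^ l ≠ 0 := zpow_ne_zero l hq
  rw [quantumNum, quantumNum, neg_neg, zpow_neg, zpow_neg, mul_comm 2 l, zpow_mul, zpow_two]
  field_simp
  ring

theorem quantumNum_two_mul_add_two_mul_quantumNum_neg (hq : q ≠ 0) (l : ℤ) :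
    quantumNum q (2 * l) + 2 * quantumNum q (-l) =
      ((q ^ l) ^ 2 - 1) * (q ^ l - 1) ^ 2 / ((q ^ l) ^ 2 * (q - q⁻¹)) := by
  have ht : q ^ l ≠ 0 := zpow_ne_zero l hq
  rw [quantumNum, quantumNum, neg_neg, zpow_neg, zpow_neg, mul_comm 2 l, zpow_mul, zpow_two]
  field_simp
  ring

theorem sub_inv_ne_zero_of_sq_ne_one (hq : q ≠ 0) (h2 : q ^ 2 ≠ 1) : q - q⁻¹ ≠ 0 := by
  intro h
  apply h2
  field_simp at h
  linear_combination h

end QuantumNum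

theorem quantum_cartan_A2_invertible (q : ℂ) (hq : q ≠ 0)
    (hroot : ∀ k : ℤ, k ≠ 0 → q ^ k ≠ 1) (l : ℤ) (hl : l ≠ 0)
    (c : Matrix (Fin 3) (Fin 3) ℤ)
    (hc : ∀ i j, c i j = if i = j then 2 else -1) :
    IsUnit (Matrix.of fun i j : Fin 3 =>
      (q ^ (l * c i j) - q ^ (-(l * c i j))) / (q - q⁻¹)) := by
  have hmatrix : (Matrix.of fun i j : Fin 3 => (q ^ (l * c i j) - q ^ (-(l * c i j))) / (q - q⁻¹))
      = Matrix.of fun i j => if i = j then quantumNum q (2 * l) else quantumNum q (-l) := by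
    ext i j
    by_cases hij : i = j <;> simp [hc, hij, quantumNum, mul_comm l]
  have hpow (n : ℤ) (hn : n ≠ 0) : (q ^ l) ^ n - 1 ≠ 0 := by
    rw [sub_ne_zero, ← zpow_mul]
    exact hroot _ (mul_ne_zero hl hn)
  have hs : q - q⁻¹ ≠ 0 := sub_inv_ne_zero_of_sq_ne_one hq (mod_cast hroot 2 two_ne_zero)
  have ht : q ^ l ≠ 0 := zpow_ne_zero l hq
  have h1 : q ^ l - 1 ≠ 0 := by simpa using hpow 1 one_ne_zero
  have h2 : (q ^ l) ^ 2 - 1 ≠ 0 := mod_cast hpow 2 two_ne_zero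
  have h3 : (q ^ l) ^ 3 - 1 ≠ 0 := mod_cast hpow 3 three_ne_zero
  have hplus : q ^ l + 1 ≠ 0 := fun h => h2 (by linear_combination (q ^ l - 1) * h)
  rw [hmatrix, Matrix.isUnit_iff_isUnit_det, Matrix.det_fin_three_of_ite_eq, isUnit_iff_ne_zero,
    quantumNum_two_mul_sub_quantumNum_neg hq, quantumNum_two_mul_add_two_mul_quantumNum_neg hq]
  have hden : (q ^ l) ^ 2 * (q - q⁻¹) ≠ 0 := by positivity
  exact mul_ne_zero (pow_ne_zero 2 (div_ne_zero (mul_ne_zero h3 hplus) hden))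
    (div_ne_zero (mul_ne_zero h2 (pow_ne_zero 2 h1)) hden)
end

section
/- Let V be a finite-dimensional complex vector space and let {x_j : j ∈ ℤ} be a family of endomorphisms of V. Suppose there exist endomorphisms ξ(l) for each nonzero integer l with [ξ(l), x_j] = x_{j+l} for all j, l. If g(z) = Σ g_j z^j is a Laurent polynomial with Σ g_j x_j = 0 on V, then for every Laurent polynomial h(z), writing p(z) = g(z)h(z) = Σ p_j z^j, one also has Σ p_j x_j = 0 on V. -/
theorem annihilating_laurent_ideal
    (V : Type*) [AddCommGroup V] [Module ℂ V] [FiniteDimensional ℂ V]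
    (x : ℤ → Module.End ℂ V) (ξ : ℤ → Module.End ℂ V)
    (hξ : ∀ l : ℤ, l ≠ 0 → ∀ j : ℤ, ξ l * x j - x j * ξ l = x (j + l))
    (g : LaurentPolynomial ℂ)
    (hg : (g.coeff.sum fun j c => c • x j) = 0)
    (h : LaurentPolynomial ℂ) :
    ((g * h).coeff.sum fun j c => c • x j) = 0 := by
  classical
  set m : ℤ → ℂ → LaurentPolynomial ℂ := fun l c => AddMonoidAlgebra.single l c with hm
  set S : LaurentPolynomial ℂ →ₗ[ℂ] Module.End ℂ V := Finsupp.linearCombination ℂ x ∘ₗ (AddMonoidAlgebra.coeffLinearEquiv ℂ).toLinearMap with hSdef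
  have hS : ∀ p : LaurentPolynomial ℂ, S p = p.coeff.sum fun j c => c • x j := fun p =>
    Finsupp.linearCombination_apply ℂ p.coeff
  have hSsingle : ∀ (k : ℤ) (a : ℂ), S (m k a) = a • x k := by
    intro k a
    rw [hS, hm]
    exact Finsupp.sum_single_index (zero_smul ℂ _)
  -- shifted sums vanish
  have shift : ∀ l : ℤ, (g.coeff.sum fun j b => b • x (j + l)) = 0 := by
    intro l
    rcases eq_or_ne l 0 with rfl | hl
    · simpa using hg
    · have e : (g.coeff.sum fun j b => b • x (j + l))
          = ξ l * (g.coeff.sum fun j b => b • x j) - (g.coeff.sum fun j b => b • x j) * ξ l := by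
        rw [Finsupp.mul_sum, Finsupp.sum_mul, ← Finsupp.sum_sub]
        refine Finsupp.sum_congr fun j _ => ?_
        rw [mul_smul_comm, smul_mul_assoc, ← smul_sub, hξ l hl j]
      rw [e, hg, mul_zero, zero_mul, sub_zero]
  have key : ∀ (l : ℤ) (c : ℂ), S (g * m l c) = 0 := by
    intro l c
    have hmul : g * m l c = g.coeff.sum fun j b => m (j + l) (b * c) := by
      rw [hm, AddMonoidAlgebra.mul_def]
      refine Finsupp.sum_congr fun j _ => ?_
      rw [AddMonoidAlgebra.coeff_single, Finsupp.sum_single_index]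
      simp
    rw [hmul, map_finsuppSum]
    have : (g.coeff.sum fun j b => S (m (j + l) (b * c)))
        = c • (g.coeff.sum fun j b => b • x (j + l)) := by
      rw [Finsupp.smul_sum]
      refine Finsupp.sum_congr fun j _ => ?_
      rw [hSsingle, mul_comm, mul_smul]
    rw [this, shift l, smul_zero]
  have hgh : (g * h : LaurentPolynomial ℂ) = h.coeff.sum fun l c => g * m l c := by
    conv_lhs => rw [← AddMonoidAlgebra.sum_coeff_single h, Finsupp.mul_sum]
  have : S (g * h) = 0 := by
    rw [hgh, map_finsuppSum]
    have : (h.coeff.sum fun l c => S (g * m l c)) = h.coeff.sum fun _ _ => (0 : Module.End ℂ V) :=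
      Finsupp.sum_congr fun l _ => key l (h.coeff l)
    rw [this, Finsupp.sum, Finset.sum_const_zero]
  rw [← hS]; exact this
end
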